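/- Fix d ≥ 1 and m ≥ 1. Let a^{(1)}, …, a^{(m)} be d×d complex matrices whose τ-tensor is diagonal with nonnegative real diagonal entries λ_1, …, λ_m. Then for every m×m complex unitary matrix U, setting b^{(l)} = ∑_{k=1}^{m} U_{lk} a^{(k)}, one has ∑_{l=1}^{m} d·|det b^{(l)}|^{2/d} ≤ ∑_{k=1}^{m} λ_k^{2/d}, and equality holds when U is the identity matrix. In other words, the supremum over all unitaries U of the total G-concurrence ∑_l d·|det b^{(l)}|^{2/d} equals ∑_{k=1}^{m} λ_k^{2/d}. -/

import Mathlib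

open scoped BigOperators Matrix

/-!
Multilinearity of the determinant expands `det (∑ c, u c • a c)` over all row selections
`k : Fin d → Fin m` with weights `∏ i, u (k i)`. These weights are invariant under permuting `k`,
so the expansion may be symmetrised, and the symmetrised coefficients are the τ-tensor. A diagonal
τ-tensor therefore gives `√d ^ d · det b⁽ˡ⁾ = ∑ c, U l c ^ d * λ c`, i.e. the G-concurrence of
`b⁽ˡ⁾` is `‖∑ c, U l c ^ d * λ c‖ ^ (2 / d)`. For `d ≥ 2` subadditivity of `t ↦ t ^ (2 / d)`
bounds this by `∑ c, ‖U l c‖ ^ 2 * λ c ^ (2 / d)`, and the columns of `U` are unit vectors;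
for `d = 1` the sum over `l` is `‖U λ‖² = ‖λ‖²`. The bound is attained at `U = 1`.
-/

/-- The τ-tensor of a family `a : Fin m → Matrix (Fin d) (Fin d) ℂ`:
`τ^a_{k₁…k_d} = (d^{d/2} / d!) ∑_{σ ∈ S_d} det (M(σ))`, where the `i`-th row of `M(σ)`
is the `i`-th row of `a (k (σ i))`. -/
noncomputable def tauTensor (d m : ℕ) (a : Fin m → Matrix (Fin d) (Fin d) ℂ)
    (k : Fin d → Fin m) : ℂ :=
  (((Real.sqrt d ^ d / d.factorial : ℝ)) : ℂ) *
    ∑ σ : Equiv.Perm (Fin d), (Matrix.of fun i j => a (k (σ i)) i j).det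

theorem Real.rpow_sum_le_sum_rpow {ι : Type*} (s : Finset ι) {f : ι → ℝ}
    (hf : ∀ i ∈ s, 0 ≤ f i) {p : ℝ} (hp : 0 < p) (hp1 : p ≤ 1) :
    (∑ i ∈ s, f i) ^ p ≤ ∑ i ∈ s, f i ^ p := by
  induction s using Finset.cons_induction with
  | empty => simp [Real.zero_rpow hp.ne']
  | cons a s _ ih =>
    rw [Finset.forall_mem_cons] at hf
    rw [Finset.sum_cons, Finset.sum_cons]
    exact (Real.rpow_add_le_add_rpow hf.1 (Finset.sum_nonneg hf.2) hp.le hp1).trans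
      (add_le_add le_rfl (ih hf.2))

theorem Real.pow_rpow_two_div {x : ℝ} (hx : 0 ≤ x) {d : ℕ} (hd : d ≠ 0) :
    (x ^ d) ^ ((2 : ℝ) / d) = x ^ 2 := by
  rw [← Real.rpow_natCast x d, ← Real.rpow_mul hx, mul_div_cancel₀ _ (by exact_mod_cast hd)]
  exact_mod_cast Real.rpow_natCast x 2

namespace Matrix

variable {n 𝕜 : Type*} [Fintype n] [DecidableEq n] [RCLike 𝕜]

theorem sum_norm_mulVec_sq_of_mem_unitaryGroup {U : Matrix n n 𝕜}
    (hU : U ∈ unitaryGroup n 𝕜) (v : n → 𝕜) :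
    ∑ i, ‖(U *ᵥ v) i‖ ^ 2 = ∑ i, ‖v i‖ ^ 2 := by
  have hnorm : ∀ w : n → 𝕜, ((∑ i, ‖w i‖ ^ 2 : ℝ) : 𝕜) = star w ⬝ᵥ w := fun w => by
    simp [dotProduct, RCLike.conj_mul]
  apply RCLike.ofReal_injective (K := 𝕜)
  rw [hnorm, hnorm, star_mulVec, ← dotProduct_mulVec, mulVec_mulVec, ← star_eq_conjTranspose,
    mem_unitaryGroup_iff'.mp hU, one_mulVec]

theorem sum_norm_apply_sq_of_mem_unitaryGroup {U : Matrix n n 𝕜}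
    (hU : U ∈ unitaryGroup n 𝕜) (j : n) : ∑ i, ‖U i j‖ ^ 2 = 1 := by
  simpa [mulVec_single_one, Pi.single_apply, apply_ite] using
    sum_norm_mulVec_sq_of_mem_unitaryGroup hU (Pi.single j 1)

end Matrix

section Expansion

variable {ι κ R : Type*} [Fintype ι] [DecidableEq ι] [Fintype κ]

theorem Matrix.det_sum_smul [CommRing R] (a : κ → Matrix ι ι R) (u : κ → R) :
    (∑ c, u c • a c).det = ∑ k : ι → κ, (∏ i, u (k i)) * (of fun i j => a (k i) i j).det := by
  have hrows : (∑ c, u c • a c) = of fun i => ∑ c, u c • a c i := by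
    ext i j; simp [Matrix.sum_apply]
  rw [hrows]
  change detRowAlternating (fun i => ∑ c, u c • a c i) = _
  rw [← AlternatingMap.coe_multilinearMap, MultilinearMap.map_sum]
  refine Fintype.sum_congr _ _ fun k => ?_
  rw [MultilinearMap.map_smul_univ]
  rfl

variable [CommSemiring R]

theorem sum_prod_mul_comp_perm (u : κ → R) (D : (ι → κ) → R) (σ : Equiv.Perm ι) :
    ∑ k : ι → κ, (∏ i, u (k i)) * D (k ∘ σ) = ∑ k : ι → κ, (∏ i, u (k i)) * D k := by
  refine Fintype.sum_equiv (Equiv.arrowCongr σ.symm (Equiv.refl κ)) _ _ fun k => ?_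
  change _ = (∏ i, u (k (σ i))) * D (k ∘ σ)
  rw [Equiv.prod_comp σ (fun i => u (k i))]

theorem sum_prod_mul_eq_sum_pow_mul_of_eq_zero [Nonempty ι] (u : κ → R) (T : (ι → κ) → R)
    (hT : ∀ k, (∃ i j, k i ≠ k j) → T k = 0) :
    ∑ k : ι → κ, (∏ i, u (k i)) * T k = ∑ c, u c ^ Fintype.card ι * T (fun _ => c) := by
  let const : κ ↪ (ι → κ) := ⟨Function.const ι, Function.const_injective⟩
  rw [← Finset.sum_subset (Finset.subset_univ (Finset.univ.map const)), Finset.sum_map]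
  · simp only [const, Function.Embedding.coeFn_mk, Function.const_apply, Finset.prod_const,
      Finset.card_univ]
    rfl
  · intro k _ hk
    obtain ⟨i₀⟩ := ‹Nonempty ι›
    rw [hT k ?_, mul_zero]
    by_contra! h
    exact hk (Finset.mem_map.2 ⟨k i₀, Finset.mem_univ _, funext fun i => h i₀ i⟩)

end Expansion

theorem det_sum_smul_mul_eq_sum_tauTensor {d m : ℕ} (a : Fin m → Matrix (Fin d) (Fin d) ℂ)
    (u : Fin m → ℂ) :
    (∑ c, u c • a c).det * ((√d ^ d : ℝ) : ℂ) =
      ∑ k : Fin d → Fin m, (∏ i, u (k i)) * tauTensor d m a k := by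
  set P : (Fin d → Fin m) → ℂ := fun k => ∏ i, u (k i)
  set D : (Fin d → Fin m) → ℂ := fun k => (Matrix.of fun i j => a (k i) i j).det
  have hdet : (∑ c, u c • a c).det = ∑ k, P k * D k := Matrix.det_sum_smul a u
  have hfact : (d.factorial : ℂ) ≠ 0 := Nat.cast_ne_zero.2 d.factorial_ne_zero
  calc (∑ c, u c • a c).det * ((√d ^ d : ℝ) : ℂ)
      = ((√d ^ d / d.factorial : ℝ) : ℂ) * ∑ _σ : Equiv.Perm (Fin d), ∑ k, P k * D k := by
        rw [Finset.sum_const, Finset.card_univ, Fintype.card_perm, Fintype.card_fin, nsmul_eq_mul,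
          hdet]
        push_cast
        field_simp
    _ = ((√d ^ d / d.factorial : ℝ) : ℂ) * ∑ σ : Equiv.Perm (Fin d), ∑ k, P k * D (k ∘ σ) := by
        congr 1
        exact Fintype.sum_congr _ _ fun σ => (sum_prod_mul_comp_perm u D σ).symm
    _ = ∑ k, P k * tauTensor d m a k := by
        rw [Finset.sum_comm, Finset.mul_sum]
        refine Fintype.sum_congr _ _ fun k => ?_
        rw [← Finset.mul_sum, mul_left_comm]
        rfl

noncomputable def gConcurrence {d : ℕ} (A : Matrix (Fin d) (Fin d) ℂ) : ℝ :=
  d * ‖A.det‖ ^ ((2 : ℝ) / d)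

theorem gConcurrence_sum_smul {d m : ℕ} (hd : d ≠ 0) {a : Fin m → Matrix (Fin d) (Fin d) ℂ}
    (hoff : ∀ k : Fin d → Fin m, (∃ i j, k i ≠ k j) → tauTensor d m a k = 0) (u : Fin m → ℂ) :
    gConcurrence (∑ c, u c • a c) =
      ‖∑ c, u c ^ d * tauTensor d m a (fun _ => c)‖ ^ ((2 : ℝ) / d) := by
  have : Nonempty (Fin d) := ⟨⟨0, by omega⟩⟩
  have h := det_sum_smul_mul_eq_sum_tauTensor a u
  rw [sum_prod_mul_eq_sum_pow_mul_of_eq_zero u _ hoff, Fintype.card_fin] at h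
  rw [← h, norm_mul, Complex.norm_real, Real.norm_of_nonneg (by positivity),
    Real.mul_rpow (norm_nonneg _) (by positivity), Real.pow_rpow_two_div (by positivity) hd,
    Real.sq_sqrt d.cast_nonneg, gConcurrence, mul_comm]

section UnitaryBound

variable {n 𝕜 : Type*} [Fintype n] [RCLike 𝕜] {lam : n → ℝ}

theorem norm_sum_pow_mul_rpow_le {d : ℕ} (hd : 2 ≤ d) (hlam : ∀ c, 0 ≤ lam c) (u : n → 𝕜) :
    ‖∑ c, u c ^ d * (lam c : 𝕜)‖ ^ ((2 : ℝ) / d) ≤ ∑ c, ‖u c‖ ^ 2 * lam c ^ ((2 : ℝ) / d) := by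
  have hd0 : (0 : ℝ) < d := by positivity
  have hterm : ∀ c, 0 ≤ ‖u c‖ ^ d * lam c := fun c => by have := hlam c; positivity
  calc ‖∑ c, u c ^ d * (lam c : 𝕜)‖ ^ ((2 : ℝ) / d)
      ≤ (∑ c, ‖u c‖ ^ d * lam c) ^ ((2 : ℝ) / d) := by
        gcongr
        refine (norm_sum_le _ _).trans_eq (Fintype.sum_congr _ _ fun c => ?_)
        rw [norm_mul, norm_pow, RCLike.norm_ofReal, abs_of_nonneg (hlam c)]
    _ ≤ ∑ c, (‖u c‖ ^ d * lam c) ^ ((2 : ℝ) / d) :=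
        Real.rpow_sum_le_sum_rpow _ (fun c _ => hterm c) (by positivity)
          ((div_le_one hd0).2 (by exact_mod_cast hd))
    _ = ∑ c, ‖u c‖ ^ 2 * lam c ^ ((2 : ℝ) / d) := by
        refine Fintype.sum_congr _ _ fun c => ?_
        rw [Real.mul_rpow (by positivity) (hlam c),
          Real.pow_rpow_two_div (norm_nonneg _) (by omega)]

theorem sum_norm_sum_pow_mul_rpow_le [DecidableEq n] {d : ℕ} (hd : d ≠ 0) {U : Matrix n n 𝕜}
    (hU : U ∈ Matrix.unitaryGroup n 𝕜) (hlam : ∀ c, 0 ≤ lam c) :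
    ∑ l, ‖∑ c, U l c ^ d * (lam c : 𝕜)‖ ^ ((2 : ℝ) / d) ≤ ∑ c, lam c ^ ((2 : ℝ) / d) := by
  obtain rfl | hd2 : d = 1 ∨ 2 ≤ d := by omega
  · simpa [Real.rpow_two, Matrix.mulVec, dotProduct] using
      (Matrix.sum_norm_mulVec_sq_of_mem_unitaryGroup hU (fun c => (lam c : 𝕜))).le
  · calc ∑ l, ‖∑ c, U l c ^ d * (lam c : 𝕜)‖ ^ ((2 : ℝ) / d)
        ≤ ∑ l, ∑ c, ‖U l c‖ ^ 2 * lam c ^ ((2 : ℝ) / d) :=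
          Finset.sum_le_sum fun l _ => norm_sum_pow_mul_rpow_le hd2 hlam (U l)
      _ = ∑ c, lam c ^ ((2 : ℝ) / d) := by
          rw [Finset.sum_comm]
          simp_rw [← Finset.sum_mul, Matrix.sum_norm_apply_sq_of_mem_unitaryGroup hU, one_mul]

end UnitaryBound

theorem gConcurrence_of_assistance_eq_general
    (d m : ℕ) (hd : 1 ≤ d)
    (a : Fin m → Matrix (Fin d) (Fin d) ℂ) (lam : Fin m → ℝ)
    (hlam : ∀ k, 0 ≤ lam k)
    (hdiag : ∀ c : Fin m, tauTensor d m a (fun _ => c) = (lam c : ℂ))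
    (hoff : ∀ k : Fin d → Fin m, (∃ i j, k i ≠ k j) → tauTensor d m a k = 0) :
    IsGreatest
      {x : ℝ | ∃ U ∈ Matrix.unitaryGroup (Fin m) ℂ,
        x = ∑ l : Fin m,
              (d : ℝ) * ‖(∑ k : Fin m, U l k • a k).det‖ ^ ((2 : ℝ) / d)}
      (∑ k : Fin m, lam k ^ ((2 : ℝ) / d)) := by
  have hd0 : d ≠ 0 := by omega
  have hG : ∀ u : Fin m → ℂ, (d : ℝ) * ‖(∑ k, u k • a k).det‖ ^ ((2 : ℝ) / d) =
      ‖∑ c, u c ^ d * (lam c : ℂ)‖ ^ ((2 : ℝ) / d) := fun u => by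
    simpa only [gConcurrence, hdiag] using gConcurrence_sum_smul hd0 hoff u
  refine ⟨⟨1, one_mem _, ?_⟩, ?_⟩
  · simp_rw [hG, Matrix.one_apply, ite_pow, one_pow, zero_pow hd0, ite_mul, one_mul, zero_mul,
      Finset.sum_ite_eq, Finset.mem_univ, if_true, Complex.norm_real,
      Real.norm_of_nonneg (hlam _)]
  · rintro _ ⟨U, hU, rfl⟩
    simp_rw [hG]
    exact sum_norm_sum_pow_mul_rpow_le hd0 hU hlam

/-- **Theorem 4 (G-concurrence of assistance).** If the τ-tensor of the family `a` is
diagonal with nonnegative real diagonal entries `λ_k`, then `∑_k λ_k^{2/d}` is the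
greatest value of the total G-concurrence `∑_l d |det (∑_k U_{lk} a^{(k)})|^{2/d}` over
all unitary changes of decomposition `U`; in particular the bound is attained at `U = 1`. -/
theorem gConcurrence_of_assistance_eq
    (d m : ℕ) (hd : 1 ≤ d) (hm : 1 ≤ m)
    (a : Fin m → Matrix (Fin d) (Fin d) ℂ) (lam : Fin m → ℝ)
    (hlam : ∀ k, 0 ≤ lam k)
    (hdiag : ∀ c : Fin m, tauTensor d m a (fun _ => c) = (lam c : ℂ))
    (hoff : ∀ k : Fin d → Fin m, (∃ i j, k i ≠ k j) → tauTensor d m a k = 0) :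
    IsGreatest
      {x : ℝ | ∃ U ∈ Matrix.unitaryGroup (Fin m) ℂ,
        x = ∑ l : Fin m,
              (d : ℝ) * ‖(∑ k : Fin m, U l k • a k).det‖ ^ ((2 : ℝ) / d)}
      (∑ k : Fin m, lam k ^ ((2 : ℝ) / d)) :=
  gConcurrence_of_assistance_eq_general d m hd a lam hlam hdiag hoff
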